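/- Let M be a metric space with base point 0 and let f ∈ S_{Lip_0(M)} be such that for every ε > 0 there exist a sequence of molecules (m_{u_iv_i})_{i∈ℕ} contained in the slice S(f, ε) = {μ ∈ B_{F(M)} : f(μ) > 1 − ε} and a sequence (A_i)_{i∈ℕ} of pairwise disjoint subsets of M such that u_i ∈ A_i and d(u_i,x) + d(v_i,y) ≥ (1 − ε)(d(u_i,v_i) + d(x,y)) for all i ∈ ℕ and all x, y ∈ M \ A_i. Then f is a Daugavet-point of the Banach space Lip_0(M). In particular, if f ∈ S_{Lip_0(M)} is such that for every ε > 0 there exists a sequence of molecules (m_{u_iv_i})_{i∈ℕ} contained in S(f, ε) such that at least one of the sequences (u_i) and (v_i) is unbounded, then f is a Daugavet-point. -/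

import Mathlib

open Metric Set Filter NNReal

noncomputable section

/-- The topological dual of a normed space (the former Mathlib `NormedSpace.Dual`), with the
topology on `E` taken from its norm. -/
abbrev NormedSpace.Dual (𝕜 : Type*) (E : Type*) [NontriviallyNormedField 𝕜]
    [SeminormedAddCommGroup E] [NormedSpace 𝕜 E] : Type _ := E →L[𝕜] 𝕜

namespace DeltaPaper

/-! ### Generic Banach space notions -/

variable {X : Type*} [NormedAddCommGroup X] [NormedSpace ℝ X]

/-- `x` is a Daugavet-point: every slice of the unit ball contains, for every `ε > 0`,
an element at distance at least `2 - ε` from `x`. -/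
def IsDaugavetPoint (x : X) : Prop :=
  ∀ (φ : NormedSpace.Dual ℝ X) (α : ℝ), ‖φ‖ = 1 → 0 < α → ∀ ε > 0,
    ∃ y : X, ‖y‖ ≤ 1 ∧ 1 - α < φ y ∧ 2 - ε ≤ ‖x - y‖

/-- `x` is a Δ-point: every slice of the unit ball containing `x` contains, for every
`ε > 0`, an element at distance at least `2 - ε` from `x`. -/
def IsDeltaPoint (x : X) : Prop :=
  ∀ (φ : NormedSpace.Dual ℝ X) (α : ℝ), ‖φ‖ = 1 → 0 < α → 1 - α < φ x → ∀ ε > 0,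
    ∃ y : X, ‖y‖ ≤ 1 ∧ 1 - α < φ y ∧ 2 - ε ≤ ‖x - y‖

/-- `x*` is a w*-Daugavet-point of the dual of `X`. -/
def IsWeakStarDaugavetPoint (f : NormedSpace.Dual ℝ X) : Prop :=
  ∀ (x : X) (α : ℝ), ‖x‖ = 1 → 0 < α → ∀ ε > 0,
    ∃ g : NormedSpace.Dual ℝ X, ‖g‖ ≤ 1 ∧ 1 - α < g x ∧ 2 - ε ≤ ‖f - g‖

/-- `x*` is a w*-Δ-point of the dual of `X`. -/
def IsWeakStarDeltaPoint (f : NormedSpace.Dual ℝ X) : Prop :=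
  ∀ (x : X) (α : ℝ), ‖x‖ = 1 → 0 < α → 1 - α < f x → ∀ ε > 0,
    ∃ g : NormedSpace.Dual ℝ X, ‖g‖ ≤ 1 ∧ 1 - α < g x ∧ 2 - ε ≤ ‖f - g‖

/-- `x` is a denting point of the unit ball: it lies in slices of the unit ball of
arbitrarily small diameter. -/
def IsDentingPoint (x : X) : Prop :=
  ‖x‖ ≤ 1 ∧ ∀ ε > 0, ∃ (φ : NormedSpace.Dual ℝ X) (α : ℝ), ‖φ‖ = 1 ∧ 0 < α ∧
    1 - α < φ x ∧ Metric.diam {y : X | ‖y‖ ≤ 1 ∧ 1 - α < φ y} < ε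

/-- The Kuratowski measure of non-compactness of a set: the infimum of all `ε > 0`
such that the set can be covered by finitely many sets of diameter less than `ε`. -/
def kuratowski {Y : Type*} [PseudoMetricSpace Y] (A : Set Y) : ℝ :=
  sInf {ε : ℝ | 0 < ε ∧ ∃ 𝒞 : Finset (Set Y), (A ⊆ ⋃ B ∈ 𝒞, B) ∧ ∀ B ∈ 𝒞, Metric.diam B < ε}

/-! ### The space of Lipschitz functions vanishing at a base point -/

variable {M : Type*} [PseudoMetricSpace M]

/-- The least Lipschitz constant of a function. -/
def lipConst (f : M → ℝ) : ℝ≥0 := sInf {K | LipschitzWith K f}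

theorem lipschitzWith_lipConst {f : M → ℝ} (hf : ∃ K, LipschitzWith K f) :
    LipschitzWith (lipConst f) f := by
  obtain ⟨K₀, hK₀⟩ := hf
  rw [lipschitzWith_iff_dist_le_mul]
  intro x y
  rcases le_or_gt (dist x y) 0 with h | h
  · have h0 : dist x y = 0 := le_antisymm h dist_nonneg
    have := hK₀.dist_le_mul x y
    rw [h0, mul_zero] at this ⊢
    exact this
  · rw [← div_le_iff₀ h]
    have hnn : 0 ≤ dist (f x) (f y) / dist x y := by positivity
    rw [← Real.coe_toNNReal _ hnn, NNReal.coe_le_coe]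
    refine le_csInf ⟨K₀, hK₀⟩ ?_
    intro K hK
    rw [← NNReal.coe_le_coe, Real.coe_toNNReal _ hnn, div_le_iff₀ h]
    exact hK.dist_le_mul x y

theorem lipConst_le {f : M → ℝ} {K : ℝ≥0} (hK : LipschitzWith K f) : lipConst f ≤ K :=
  csInf_le (OrderBot.bddBelow _) hK

theorem lipschitzWith_smul {f : M → ℝ} {K : ℝ≥0} (hK : LipschitzWith K f) (c : ℝ) :
    LipschitzWith (‖c‖₊ * K) (c • f) := by
  rw [lipschitzWith_iff_dist_le_mul] at *
  intro x y
  have : dist ((c • f) x) ((c • f) y) = ‖c‖ * dist (f x) (f y) := by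
    simp only [Pi.smul_apply, smul_eq_mul, Real.dist_eq, ← mul_sub, abs_mul, Real.norm_eq_abs]
  rw [this, NNReal.coe_mul, coe_nnnorm, mul_assoc]
  exact mul_le_mul_of_nonneg_left (hK x y) (norm_nonneg c)

variable (M) in
/-- The submodule of `M → ℝ` consisting of Lipschitz functions vanishing at the
base point `z`. -/
def Lip0 (z : M) : Submodule ℝ (M → ℝ) where
  carrier := {f | (∃ K, LipschitzWith K f) ∧ f z = 0}
  add_mem' := by
    rintro f g ⟨⟨K, hK⟩, hf0⟩ ⟨⟨L, hL⟩, hg0⟩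
    exact ⟨⟨K + L, hK.add hL⟩, by simp [hf0, hg0]⟩
  zero_mem' := ⟨⟨0, LipschitzWith.const' 0⟩, rfl⟩
  smul_mem' := by
    rintro c f ⟨⟨K, hK⟩, hf0⟩
    exact ⟨⟨‖c‖₊ * K, lipschitzWith_smul hK c⟩, by simp [hf0]⟩

variable {z : M}

instance : NormedAddCommGroup ↥(Lip0 M z) :=
  AddGroupNorm.toNormedAddCommGroup
    { toFun := fun f => ((lipConst (f : M → ℝ) : ℝ≥0) : ℝ)
      map_zero' := by
        have h0 : lipConst (0 : M → ℝ) = 0 :=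
          le_antisymm (lipConst_le (by simpa using LipschitzWith.const' (0 : ℝ))) bot_le
        show ((lipConst ((0 : ↥(Lip0 M z)) : M → ℝ) : ℝ≥0) : ℝ) = 0
        rw [show ((0 : ↥(Lip0 M z)) : M → ℝ) = 0 from rfl, h0, NNReal.coe_zero]
      add_le' := by
        intro f g
        have hf := lipschitzWith_lipConst f.2.1
        have hg := lipschitzWith_lipConst g.2.1
        have : lipConst ((f + g : ↥(Lip0 M z)) : M → ℝ) ≤
            lipConst (f : M → ℝ) + lipConst (g : M → ℝ) := by
          refine lipConst_le ?_
          have := hf.add hg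
          exact this
        exact_mod_cast this
      neg' := by
        intro f
        show ((lipConst ((-f : ↥(Lip0 M z)) : M → ℝ) : ℝ≥0) : ℝ) = _
        rw [show ((-f : ↥(Lip0 M z)) : M → ℝ) = -(f : M → ℝ) from rfl]
        unfold lipConst
        congr 2
        ext K
        exact ⟨fun hK => by simpa using hK.neg, fun hK => hK.neg⟩
      eq_zero_of_map_eq_zero' := by
        intro f hf
        replace hf : ((lipConst (f : M → ℝ) : ℝ≥0) : ℝ) = 0 := hf
        have h0 : lipConst (f : M → ℝ) = 0 := by exact_mod_cast hf
        have hl : LipschitzWith 0 (f : M → ℝ) := h0 ▸ lipschitzWith_lipConst f.2.1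
        ext x
        have := hl.dist_le_mul x z
        simp only [NNReal.coe_zero, zero_mul] at this
        have hxz : (f : M → ℝ) x = (f : M → ℝ) z :=
          dist_le_zero.mp this
        simpa [f.2.2] using hxz }

theorem Lip0.norm_def (f : ↥(Lip0 M z)) : ‖f‖ = ((lipConst (f : M → ℝ) : ℝ≥0) : ℝ) := rfl

theorem Lip0.lipschitzWith (f : ↥(Lip0 M z)) : LipschitzWith (lipConst (f : M → ℝ)) (f : M → ℝ) :=
  lipschitzWith_lipConst f.2.1

instance : NormedSpace ℝ ↥(Lip0 M z) where
  norm_smul_le c f := by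
    have : lipConst ((c • f : ↥(Lip0 M z)) : M → ℝ) ≤ ‖c‖₊ * lipConst (f : M → ℝ) :=
      lipConst_le (lipschitzWith_smul (Lip0.lipschitzWith f) c)
    calc ‖c • f‖ = ((lipConst ((c • f : ↥(Lip0 M z)) : M → ℝ) : ℝ≥0) : ℝ) := rfl
      _ ≤ ((‖c‖₊ * lipConst (f : M → ℝ) : ℝ≥0) : ℝ) := by exact_mod_cast this
      _ = ‖c‖ * ‖f‖ := by push_cast [Lip0.norm_def]; rfl

variable (M z) in
/-- The evaluation functional `δ_x ∈ Lip₀(M)*`. -/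
def evalδ (x : M) : NormedSpace.Dual ℝ ↥(Lip0 M z) :=
  LinearMap.mkContinuous
    { toFun := fun f => (f : M → ℝ) x
      map_add' := fun f g => rfl
      map_smul' := fun c f => rfl }
    (dist x z)
    (by
      intro f
      have := (Lip0.lipschitzWith f).dist_le_mul x z
      simp only [f.2.2, Real.dist_eq, sub_zero] at this
      calc ‖(f : M → ℝ) x‖ = |(f : M → ℝ) x - 0| := by simp
        _ ≤ (lipConst (f : M → ℝ) : ℝ) * dist x z := by
            simpa [f.2.2, Real.dist_eq] using (Lip0.lipschitzWith f).dist_le_mul x z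
        _ = dist x z * ‖f‖ := by rw [Lip0.norm_def, mul_comm])

variable (M z) in
/-- The Lipschitz-free space over `M`: the closed linear span of the evaluation
functionals inside `Lip₀(M)*`. -/
def FreeSpace : Submodule ℝ (NormedSpace.Dual ℝ ↥(Lip0 M z)) :=
  (Submodule.span ℝ (Set.range (evalδ M z))).topologicalClosure

variable (M z) in
/-- The molecule `m_{x y} = (δ_x - δ_y)/d(x,y)` as an element of `Lip₀(M)*`. -/
def molecule (x y : M) : NormedSpace.Dual ℝ ↥(Lip0 M z) :=
  (dist x y)⁻¹ • (evalδ M z x - evalδ M z y)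

theorem molecule_mem_freeSpace (x y : M) : molecule M z x y ∈ FreeSpace M z :=
  Submodule.le_topologicalClosure _
    (Submodule.smul_mem _ _ (Submodule.sub_mem _
      (Submodule.subset_span ⟨x, rfl⟩) (Submodule.subset_span ⟨y, rfl⟩)))

variable (M z) in
/-- The molecule `m_{x y}` as an element of the free space `F(M)`. -/
def mol (x y : M) : ↥(FreeSpace M z) := ⟨molecule M z x y, molecule_mem_freeSpace x y⟩

variable (M) in
/-- A metric space is uniformly discrete if distances between distinct points are
bounded below by a positive constant. -/
def UniformlyDiscrete : Prop := ∃ θ > (0:ℝ), ∀ x y : M, x ≠ y → θ ≤ dist x y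

/-- A norm-one Lipschitz function is local if its Lipschitz constant is approximated
on pairs of arbitrarily close points. -/
def IsLocal (f : ↥(Lip0 M z)) : Prop :=
  ∀ ε > 0, ∃ u v : M, u ≠ v ∧
    ‖f‖ - ε < ((f : M → ℝ) u - (f : M → ℝ) v) / dist u v ∧ dist u v < ε

/-- `f ∈ S_{Lip₀(M)}` is a w*-Daugavet-point: for every w*-slice `S(μ, α)` of
`B_{Lip₀(M)}` (`μ` a norm-one element of `F(M)`) and every `ε > 0` there is `g` in the
slice with `‖f - g‖ ≥ 2 - ε`. -/
def IsLipWeakStarDaugavetPoint (f : ↥(Lip0 M z)) : Prop :=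
  ∀ μ : NormedSpace.Dual ℝ ↥(Lip0 M z), μ ∈ FreeSpace M z → ‖μ‖ = 1 → ∀ α > (0:ℝ), ∀ ε > (0:ℝ),
    ∃ g : ↥(Lip0 M z), ‖g‖ ≤ 1 ∧ 1 - α < μ g ∧ 2 - ε ≤ ‖f - g‖

/-- `f ∈ S_{Lip₀(M)}` is a w*-Δ-point: the same as above, but only for w*-slices
containing `f`. -/
def IsLipWeakStarDeltaPoint (f : ↥(Lip0 M z)) : Prop :=
  ∀ μ : NormedSpace.Dual ℝ ↥(Lip0 M z), μ ∈ FreeSpace M z → ‖μ‖ = 1 → ∀ α > (0:ℝ),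
    1 - α < μ f → ∀ ε > (0:ℝ),
    ∃ g : ↥(Lip0 M z), ‖g‖ ≤ 1 ∧ 1 - α < μ g ∧ 2 - ε ≤ ‖f - g‖

end DeltaPaper

/-!
Fix a slice `S(φ, α)` of the unit ball of `Lip₀(M)` and some `h` in it. Changing `(1 - ε) h`
only inside `A_i` gives a 1-Lipschitz `g_i` with `g_i(v_i) - g_i(u_i) = (1 - ε) d(u_i, v_i)`:
the separation inequality is exactly the compatibility condition for this Lipschitz extension.
Then `‖f - g_i‖ ≥ m_{u_i v_i}(f - g_i) > 2 - 2ε`. The differences `g_i - (1 - ε) h` have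
disjoint supports, so all their signed finite sums have norm at most `4`; hence
`φ(g_i - (1 - ε) h) → 0` and `g_i` lies in the slice for large `i`.

If `(u_i)` or `(v_i)` is unbounded, put `D_i = d(u_i, 0) + d(v_i, 0)`: the annuli
`{εD_i/4 ≤ d(·, 0) < 4D_i/ε}` satisfy the separation inequality, and along a sparse subsequence
they are pairwise disjoint.
-/

open DeltaPaper NormedSpace
open Function
open scoped Topology

section Metric

variable {M : Type*} [PseudoMetricSpace M]

theorem exists_forall_le_and_le {ι : Type*} {lo hi : ι → ℝ} (h : ∀ i j, lo i ≤ hi j) :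
    ∃ a, ∀ i, lo i ≤ a ∧ a ≤ hi i := by
  rcases isEmpty_or_nonempty ι with hι | hι
  · exact ⟨0, isEmptyElim⟩
  · have hbdd : BddAbove (range lo) := ⟨hi hι.some, forall_mem_range.2 fun i => h i _⟩
    exact ⟨⨆ i, lo i, fun i => ⟨le_ciSup hbdd i, ciSup_le fun k => h k i⟩⟩

def PairSeparatedFrom (c : ℝ) (u v : M) (S : Set M) : Prop :=
  ∀ x ∈ S, ∀ y ∈ S, c * (dist u v + dist x y) ≤ dist u x + dist v y

theorem lipschitzWith_one_const_add_dist (a : ℝ) (w : M) :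
    LipschitzWith 1 fun x => a + dist x w :=
  LipschitzWith.of_dist_le_mul fun x y => by
    simpa [Real.dist_eq] using abs_dist_sub_le x y w

theorem lipschitzWith_one_const_sub_dist (a : ℝ) (w : M) :
    LipschitzWith 1 fun x => a - dist x w :=
  LipschitzWith.of_dist_le_mul fun x y => by
    rw [Real.dist_eq, NNReal.coe_one, one_mul, sub_sub_sub_cancel_left, abs_sub_comm]
    exact abs_dist_sub_le x y w

theorem exists_lipschitzWith_one_eqOn_of_pairSeparatedFrom {h : M → ℝ} (hh : LipschitzWith 1 h)
    {c : ℝ} (hc0 : 0 ≤ c) (hc1 : c ≤ 1) {u v : M} {S : Set M}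
    (hsep : PairSeparatedFrom c u v S) :
    ∃ g : M → ℝ, LipschitzWith 1 g ∧ EqOn g (fun x => c * h x) S ∧
      g v - g u = c * dist u v := by
  set t := dist u v
  have hH : ∀ x y, c * h x - c * h y ≤ c * dist x y := fun x y => by
    rw [← mul_sub]
    refine mul_le_mul_of_nonneg_left ((le_abs_self _).trans ?_) hc0
    simpa [Real.dist_eq] using hh.dist_le_mul x y
  have hcd : ∀ x y : M, c * dist x y ≤ dist x y := fun x y =>
    mul_le_of_le_one_left dist_nonneg hc1
  obtain ⟨a, ha⟩ := exists_forall_le_and_le (ι := S)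
    (lo := fun x => max (c * h x - dist u x) (c * h x - dist v x - c * t))
    (hi := fun y => min (c * h y + dist u y) (c * h y + dist v y - c * t)) <| by
      rintro ⟨x, hx⟩ ⟨y, hy⟩
      have hxvuy : c * dist x y ≤ c * dist v x + c * t + c * dist u y := by
        have h4 := dist_triangle4 x v u y
        rw [dist_comm v u] at h4
        rw [← mul_add, ← mul_add, dist_comm v x]
        exact mul_le_mul_of_nonneg_left h4 hc0
      simp only [max_le_iff, le_min_iff]
      refine ⟨⟨?_, ?_⟩, ?_, ?_⟩
      · linarith [hH x y, hcd x y, dist_triangle_left x y u]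
      · linarith [hH x y, hcd v x, hcd u y]
      · linarith [hH x y, hsep x hx y hy]
      · linarith [hH x y, hcd x y, dist_triangle_left x y v]
  have hcH : LipschitzWith 1 fun x => c * h x :=
    (lipschitzWith_smul hh c).weaken <| by
      rw [mul_one, ← NNReal.coe_le_coe, coe_nnnorm, Real.norm_of_nonneg hc0]
      exact hc1
  -- clamp `c * h` into `[a - d(·, u), a + d(·, u)]`, then into
  -- `[a + c t - d(·, v), a + c t + d(·, v)]`: the clamps pin the values `a` at `u` and `a + c t`
  -- at `v`, and the choice of `a` makes them inactive on `S`
  refine ⟨fun x => max (a + c * t - dist x v) (min (a + c * t + dist x v)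
    (max (a - dist x u) (min (a + dist x u) (c * h x)))), ?_, fun x hx => ?_, ?_⟩
  · simpa only [max_self] using (lipschitzWith_one_const_sub_dist _ v).max
      ((lipschitzWith_one_const_add_dist _ v).min ((lipschitzWith_one_const_sub_dist a u).max
        ((lipschitzWith_one_const_add_dist a u).min hcH)))
  · obtain ⟨⟨h1, h2⟩, h3, h4⟩ : (c * h x - dist u x ≤ a ∧ c * h x - dist v x - c * t ≤ a) ∧
        a ≤ c * h x + dist u x ∧ a ≤ c * h x + dist v x - c * t :=
      ⟨max_le_iff.1 (ha ⟨x, hx⟩).1, le_min_iff.1 (ha ⟨x, hx⟩).2⟩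
    have e1 : min (a + dist u x) (c * h x) = c * h x := min_eq_right (by linarith)
    have e2 : max (a - dist u x) (c * h x) = c * h x := max_eq_right (by linarith)
    have e3 : min (a + c * t + dist v x) (c * h x) = c * h x := min_eq_right (by linarith)
    have e4 : max (a + c * t - dist v x) (c * h x) = c * h x := max_eq_right (by linarith)
    simp only [dist_comm x, e1, e2, e3, e4]
  · have hct : c * t ≤ t := hcd u v
    have ht : 0 ≤ c * t := mul_nonneg hc0 dist_nonneg
    have e1 : max a (min a (c * h u)) = a := max_eq_left (min_le_left _ _)
    have e2 : min (a + c * t + t) a = a := min_eq_right (by linarith)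
    have e3 : max (a + c * t - t) a = a := max_eq_right (by linarith)
    simp only [dist_self, add_zero, sub_zero, dist_comm v u]
    rw [max_eq_left (min_le_left (a + c * t) _), e1, e2, e3]
    ring

theorem pairSeparatedFrom_compl_annulus {ε : ℝ} (hε0 : 0 ≤ ε) (hε1 : ε ≤ 1) {z u v : M}
    {r R : ℝ} (hr : 4 * r ≤ ε * (dist u z + dist v z))
    (hR : 4 * (dist u z + dist v z) ≤ ε * R) :
    PairSeparatedFrom (1 - ε) u v (ball z R \ ball z r)ᶜ := by
  intro x hx y hy
  rw [mem_compl_iff, Set.mem_sdiff, not_and_or, mem_ball, mem_ball, not_lt, not_not] at hx hy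
  have huv := mul_le_mul_of_nonneg_left (dist_triangle_right u v z) (sub_nonneg.2 hε1)
  have hxy := mul_le_mul_of_nonneg_left (dist_triangle_right x y z) (sub_nonneg.2 hε1)
  have hux := abs_dist_sub_le u x z
  have hvy := abs_dist_sub_le v y z
  rw [abs_le] at hux hvy
  have := mul_nonneg hε0 (dist_nonneg (x := x) (y := z))
  have := mul_nonneg hε0 (dist_nonneg (x := y) (y := z))
  have := mul_nonneg hε0 (dist_nonneg (x := u) (y := v))
  rcases hx with hx | hx <;> rcases hy with hy | hy
  · nlinarith [mul_le_mul_of_nonneg_left hx hε0, mul_le_mul_of_nonneg_left hy hε0]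
  all_goals nlinarith

theorem lipschitzWith_sum_of_pairwise_disjoint_support {ι : Type*} {f : ι → M → ℝ} {K : ℝ≥0}
    (hf : ∀ i, LipschitzWith K (f i)) (hdisj : Pairwise (Disjoint on fun i => support (f i)))
    (T : Finset ι) : LipschitzWith (2 * K) (∑ i ∈ T, f i) := by
  classical
  have hcard : ∀ x, (T.filter fun i => f i x ≠ 0).card ≤ 1 := fun x =>
    Finset.card_le_one.2 fun i hi j hj => by_contra fun hij =>
      Set.disjoint_left.1 (hdisj hij) (Finset.mem_filter.1 hi).2 (Finset.mem_filter.1 hj).2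
  refine LipschitzWith.of_dist_le_mul fun x y => ?_
  rw [Real.dist_eq, Finset.sum_apply, Finset.sum_apply, ← Finset.sum_sub_distrib,
    ← Finset.sum_filter_of_ne (p := fun i => f i x ≠ 0 ∨ f i y ≠ 0) fun i _ hi => by
      by_contra! h; simp [h.1, h.2] at hi, Finset.filter_or]
  calc |∑ i ∈ T.filter (fun i => f i x ≠ 0) ∪ T.filter (fun i => f i y ≠ 0), (f i x - f i y)|
      ≤ ∑ i ∈ T.filter (fun i => f i x ≠ 0) ∪ T.filter (fun i => f i y ≠ 0), |f i x - f i y| :=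
        Finset.abs_sum_le_sum_abs _ _
    _ ≤ (T.filter (fun i => f i x ≠ 0) ∪ T.filter (fun i => f i y ≠ 0)).card * (K * dist x y) := by
        rw [← nsmul_eq_mul]
        exact Finset.sum_le_card_nsmul _ _ _ fun i _ => by
          simpa [Real.dist_eq] using (hf i).dist_le_mul x y
    _ ≤ 2 * (K * dist x y) := by
        gcongr
        exact_mod_cast (Finset.card_union_le _ _).trans (add_le_add (hcard x) (hcard y))
    _ = ↑(2 * K) * dist x y := by push_cast; ring

theorem exists_lt_dist_of_not_isBounded_range {ι : Type*} {w : ι → M}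
    (hw : ¬Bornology.IsBounded (range w)) (z : M) (C : ℝ) : ∃ i, C < dist (w i) z := by
  by_contra! h
  exact hw ((isBounded_iff_subset_closedBall z).2
    ⟨C, range_subset_iff.2 fun i => mem_closedBall.2 (h i)⟩)

end Metric

theorem eventually_notMem_of_pairwise_disjoint {α : Type*} {A : ℕ → Set α}
    (hA : Pairwise (Disjoint on A)) (x : α) : ∀ᶠ i in atTop, x ∉ A i := by
  rw [← Nat.cofinite_eq_atTop]
  exact (Set.Subsingleton.finite fun i hi j hj => by_contra fun hij =>
    Set.disjoint_left.1 (hA hij) hi hj).eventually_cofinite_notMem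

theorem exists_seq_forall_le_of_forall_exists_lt {R r : ℕ → ℝ} (hr : ∀ C, ∃ j, C < r j) :
    ∃ k : ℕ → ℕ, ∀ m n, m < n → R (k m) ≤ r (k n) := by
  obtain ⟨k, -, hk⟩ := exists_seq_of_forall_finset_exists (fun _ => True)
    (fun i j => R i ≤ r j) fun s _ => by
      obtain ⟨C, hC⟩ := (s.image R).exists_le
      obtain ⟨j, hj⟩ := hr C
      exact ⟨j, trivial, fun i hi => (hC _ (Finset.mem_image_of_mem R hi)).trans hj.le⟩
  exact ⟨k, hk⟩

theorem exists_norm_le_one_lt_apply {X : Type*} [NormedAddCommGroup X] [NormedSpace ℝ X]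
    (φ : X →L[ℝ] ℝ) {r : ℝ} (hr : r < ‖φ‖) : ∃ x, ‖x‖ ≤ 1 ∧ r < φ x := by
  obtain ⟨x, hx, hrx⟩ := φ.exists_lt_apply_of_lt_opNorm hr
  rw [Real.norm_eq_abs] at hrx
  rcases le_or_gt 0 (φ x) with hφx | hφx
  · exact ⟨x, hx.le, by rwa [abs_of_nonneg hφx] at hrx⟩
  · exact ⟨-x, by rw [norm_neg]; exact hx.le, by rwa [map_neg, ← abs_of_neg hφx]⟩

theorem tendsto_apply_zero_of_norm_sum_smul_le {X : Type*} [NormedAddCommGroup X]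
    [NormedSpace ℝ X] (φ : X →L[ℝ] ℝ) {d : ℕ → X} {C : ℝ}
    (h : ∀ s : ℕ → ℝ, (∀ i, ‖s i‖ ≤ 1) → ∀ N, ‖∑ i ∈ Finset.range N, s i • d i‖ ≤ C) :
    Tendsto (fun i => φ (d i)) atTop (𝓝 0) := by
  set s : ℕ → ℝ := fun i => SignType.sign (φ (d i))
  have hs : ∀ i, ‖s i‖ ≤ 1 := fun i => by
    simp only [s]
    generalize SignType.sign (φ (d i)) = σ
    cases σ <;> simp
  have hsum : ∀ N, ∑ i ∈ Finset.range N, |φ (d i)| ≤ ‖φ‖ * C := fun N => calc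
    ∑ i ∈ Finset.range N, |φ (d i)| = φ (∑ i ∈ Finset.range N, s i • d i) := by
      simp [s, map_sum, sign_mul_self]
    _ ≤ ‖φ‖ * C := (le_abs_self _).trans ((φ.le_opNorm _).trans
      (mul_le_mul_of_nonneg_left (h s hs N) (norm_nonneg φ)))
  exact (summable_of_sum_range_le (fun _ => abs_nonneg _) hsum).of_abs.tendsto_atTop_zero

namespace DeltaPaper

theorem isDaugavetPoint_of_forall {X : Type*} [NormedAddCommGroup X] [NormedSpace ℝ X] {x : X}
    (h : ∀ φ : Dual ℝ X, ‖φ‖ = 1 → ∀ ε > 0, ε ≤ 1 →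
      ∃ y : X, ‖y‖ ≤ 1 ∧ 1 - 3 * ε < φ y ∧ 2 - 2 * ε ≤ ‖x - y‖) :
    IsDaugavetPoint x := by
  intro φ α hφ hα ε hε
  obtain ⟨y, hy, hφy, hxy⟩ :=
    h φ hφ (min (min (α / 3) (ε / 2)) 1) (by positivity) (min_le_right _ _)
  have := min_le_left (min (α / 3) (ε / 2)) 1
  have := min_le_left (α / 3) (ε / 2)
  have := min_le_right (α / 3) (ε / 2)
  exact ⟨y, hy, by linarith, by linarith⟩

section Lip0

variable {M : Type*} [PseudoMetricSpace M] {z : M}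

theorem Lip0.lipschitzWith_one_of_norm_le_one {h : Lip0 M z} (hh : ‖h‖ ≤ 1) :
    LipschitzWith 1 (h : M → ℝ) :=
  (Lip0.lipschitzWith h).weaken (by exact_mod_cast hh)

theorem Lip0.norm_le_of_lipschitzWith {g : Lip0 M z} {K : ℝ≥0}
    (hg : LipschitzWith K (g : M → ℝ)) : ‖g‖ ≤ K :=
  NNReal.coe_le_coe.2 (lipConst_le hg)

theorem molecule_apply (x y : M) (f : Lip0 M z) :
    molecule M z x y f = (dist x y)⁻¹ * ((f : M → ℝ) x - (f : M → ℝ) y) := rfl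

theorem Lip0.exists_eqOn_of_pairSeparatedFrom {h : Lip0 M z} (hh : ‖h‖ ≤ 1) {c : ℝ}
    (hc0 : 0 ≤ c) (hc1 : c ≤ 1) {u v : M} {S : Set M} (hz : z ∈ S)
    (hsep : PairSeparatedFrom c u v S) :
    ∃ g : Lip0 M z, ‖g‖ ≤ 1 ∧ EqOn (g : M → ℝ) (fun x => c * (h : M → ℝ) x) S ∧
      (g : M → ℝ) v - (g : M → ℝ) u = c * dist u v := by
  obtain ⟨g, hg, hgS, hguv⟩ := exists_lipschitzWith_one_eqOn_of_pairSeparatedFrom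
    (Lip0.lipschitzWith_one_of_norm_le_one hh) hc0 hc1 hsep
  have hgz : g z = 0 := by simp [hgS hz, h.2.2]
  let g' : Lip0 M z := ⟨g, ⟨1, hg⟩, hgz⟩
  exact ⟨g', (Lip0.norm_le_of_lipschitzWith (g := g') hg).trans_eq NNReal.coe_one, hgS, hguv⟩

theorem Lip0.norm_sum_le_of_pairwise_disjoint_support {ι : Type*} {d : ι → Lip0 M z} {K : ℝ≥0}
    (hd : ∀ i, ‖d i‖ ≤ K) (hdisj : Pairwise (Disjoint on fun i => support (d i : M → ℝ)))
    (T : Finset ι) : ‖∑ i ∈ T, d i‖ ≤ 2 * K := by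
  have := lipschitzWith_sum_of_pairwise_disjoint_support
    (fun i => (Lip0.lipschitzWith (d i)).weaken (NNReal.coe_le_coe.1 (hd i))) hdisj T
  rw [← Submodule.coe_sum] at this
  exact_mod_cast Lip0.norm_le_of_lipschitzWith this

end Lip0

variable {M : Type*} [MetricSpace M] {z : M}

theorem exists_far_of_separated_molecules (f : Lip0 M z) {ε : ℝ} (hε0 : 0 < ε) (hε1 : ε ≤ 1)
    {u v : ℕ → M} {A : ℕ → Set M} (huv : ∀ i, u i ≠ v i)
    (hmol : ∀ i, ‖molecule M z (u i) (v i)‖ ≤ 1 ∧ 1 - ε < molecule M z (u i) (v i) f)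
    (hdisj : Pairwise (Disjoint on A)) (hzA : ∀ i, z ∉ A i)
    (hsep : ∀ i, PairSeparatedFrom (1 - ε) (u i) (v i) (A i)ᶜ)
    (φ : Dual ℝ (Lip0 M z)) (hφ : ‖φ‖ = 1) :
    ∃ g : Lip0 M z, ‖g‖ ≤ 1 ∧ 1 - 3 * ε < φ g ∧ 2 - 2 * ε ≤ ‖f - g‖ := by
  obtain ⟨h, hh, hφh⟩ := exists_norm_le_one_lt_apply φ (r := 1 - ε) (by linarith)
  choose g hg hgA hguv using fun i =>
    Lip0.exists_eqOn_of_pairSeparatedFrom hh (sub_nonneg.2 hε1) (by linarith) (hzA i) (hsep i)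
  set d : ℕ → Lip0 M z := fun i => g i - (1 - ε) • h
  have hsupp : ∀ i, support (d i : M → ℝ) ⊆ A i := fun i x hx => by_contra fun hxA =>
    hx (by simp [d, hgA i hxA])
  have hd : ∀ i, ‖d i‖ ≤ 2 := fun i => calc
    ‖d i‖ ≤ ‖g i‖ + ‖(1 - ε) • h‖ := norm_sub_le _ _
    _ ≤ 1 + 1 := by
      gcongr
      · exact hg i
      · rw [norm_smul, Real.norm_of_nonneg (by linarith)]
        exact mul_le_one₀ (by linarith) (norm_nonneg h) hh
    _ = 2 := by norm_num
  have hlim : Tendsto (fun i => φ (d i)) atTop (𝓝 0) :=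
    tendsto_apply_zero_of_norm_sum_smul_le φ (C := 2 * 2) fun s hs N =>
      Lip0.norm_sum_le_of_pairwise_disjoint_support (K := 2)
        (fun i => (norm_smul_le _ _).trans <| by
          simpa using mul_le_mul (hs i) (hd i) (norm_nonneg _) zero_le_one)
        (fun i j hij => (hdisj hij).mono ((support_smul_subset_right _ _).trans (hsupp i))
          ((support_smul_subset_right _ _).trans (hsupp j))) _
  obtain ⟨i, hi⟩ := ((tendsto_order.1 hlim).1 (-ε) (by linarith)).exists
  have hmg : molecule M z (u i) (v i) (g i) = -(1 - ε) := by
    have ht : dist (u i) (v i) ≠ 0 := dist_ne_zero.2 (huv i)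
    rw [molecule_apply, ← neg_sub, hguv i]
    field_simp
  refine ⟨g i, hg i, ?_, ?_⟩
  · have hgi : g i = d i + (1 - ε) • h := by simp [d]
    rw [hgi, map_add, map_smul, smul_eq_mul]
    nlinarith
  · calc 2 - 2 * ε ≤ molecule M z (u i) (v i) (f - g i) := by
          rw [map_sub, hmg]; linarith [(hmol i).2]
      _ ≤ ‖f - g i‖ := (le_abs_self _).trans (((molecule M z (u i) (v i)).le_opNorm _).trans
          (mul_le_of_le_one_left (norm_nonneg _) (hmol i).1))

theorem isDaugavetPoint_of_separated_molecules (f : Lip0 M z)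
    (h : ∀ ε > (0:ℝ), ∃ (u v : ℕ → M) (A : ℕ → Set M), (∀ i, u i ≠ v i) ∧
      (∀ i, ‖molecule M z (u i) (v i)‖ ≤ 1 ∧ 1 - ε < molecule M z (u i) (v i) f) ∧
      Pairwise (Disjoint on A) ∧ ∀ i, PairSeparatedFrom (1 - ε) (u i) (v i) (A i)ᶜ) :
    IsDaugavetPoint f := by
  refine isDaugavetPoint_of_forall fun φ hφ ε hε0 hε1 => ?_
  obtain ⟨u, v, A, huv, hmol, hdisj, hsep⟩ := h ε hε0
  obtain ⟨N, hN⟩ := eventually_atTop.1 (eventually_notMem_of_pairwise_disjoint hdisj z)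
  exact exists_far_of_separated_molecules f hε0 hε1 (A := fun i => A (i + N))
    (fun i => huv (i + N)) (fun i => hmol (i + N))
    (fun i j hij => hdisj fun h => hij (Nat.add_right_cancel h))
    (fun i => hN _ (Nat.le_add_left N i)) (fun i => hsep (i + N)) φ hφ

theorem isDaugavetPoint_of_unbounded_molecules (f : Lip0 M z)
    (h : ∀ ε > (0:ℝ), ∃ u v : ℕ → M, (∀ i, u i ≠ v i) ∧
      (∀ i, ‖molecule M z (u i) (v i)‖ ≤ 1 ∧ 1 - ε < molecule M z (u i) (v i) f) ∧
      (¬ Bornology.IsBounded (Set.range u) ∨ ¬ Bornology.IsBounded (Set.range v))) :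
    IsDaugavetPoint f := by
  refine isDaugavetPoint_of_forall fun φ hφ ε hε0 hε1 => ?_
  obtain ⟨u, v, huv, hmol, hunb⟩ := h ε hε0
  set D : ℕ → ℝ := fun i => dist (u i) z + dist (v i) z
  have hD : ∀ i, 0 < D i := fun i => (dist_pos.2 (huv i)).trans_le (dist_triangle_right _ _ z)
  have hDunb : ∀ C, ∃ i, C < ε * D i / 4 := fun C => by
    obtain ⟨i, hi⟩ : ∃ i, 4 * C / ε < D i := by
      rcases hunb with hu | hv
      · obtain ⟨i, hi⟩ := exists_lt_dist_of_not_isBounded_range hu z (4 * C / ε)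
        exact ⟨i, hi.trans_le (le_add_of_nonneg_right dist_nonneg)⟩
      · obtain ⟨i, hi⟩ := exists_lt_dist_of_not_isBounded_range hv z (4 * C / ε)
        exact ⟨i, hi.trans_le (le_add_of_nonneg_left dist_nonneg)⟩
    refine ⟨i, ?_⟩
    rw [div_lt_iff₀ hε0] at hi
    linarith
  obtain ⟨k, hk⟩ := exists_seq_forall_le_of_forall_exists_lt (R := fun i => 4 * D i / ε) hDunb
  refine exists_far_of_separated_molecules f hε0 hε1
    (A := fun n => ball z (4 * D (k n) / ε) \ ball z (ε * D (k n) / 4))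
    (fun n => huv (k n)) (fun n => hmol (k n)) ((pairwise_disjoint_on _).2 fun m n hmn => ?_)
    (fun n hz => hz.2 (mem_ball_self (by have := hD (k n); positivity)))
    (fun n => pairSeparatedFrom_compl_annulus hε0.le hε1 (le_of_eq (by ring))
      (mul_div_cancel₀ _ hε0.ne').ge) φ hφ
  exact disjoint_sdiff_right.mono_left (sdiff_subset.trans (ball_subset_ball (hk m n hmn)))

end DeltaPaper

theorem statement14_general {M : Type*} [MetricSpace M] (z : M)
    (f : ↥(Lip0 M z)) :
    ((∀ ε > (0:ℝ), ∃ (u v : ℕ → M) (A : ℕ → Set M),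
        (∀ i, u i ≠ v i) ∧
        (∀ i, ‖molecule M z (u i) (v i)‖ ≤ 1 ∧ 1 - ε < molecule M z (u i) (v i) f) ∧
        (Pairwise fun i j => Disjoint (A i) (A j)) ∧
        (∀ i, u i ∈ A i) ∧
        (∀ i, ∀ x ∉ A i, ∀ y ∉ A i,
          (1 - ε) * (dist (u i) (v i) + dist x y) ≤ dist (u i) x + dist (v i) y)) →
      IsDaugavetPoint f) ∧
    ((∀ ε > (0:ℝ), ∃ u v : ℕ → M,
        (∀ i, u i ≠ v i) ∧
        (∀ i, ‖molecule M z (u i) (v i)‖ ≤ 1 ∧ 1 - ε < molecule M z (u i) (v i) f) ∧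
        (¬ Bornology.IsBounded (Set.range u) ∨ ¬ Bornology.IsBounded (Set.range v))) →
      IsDaugavetPoint f) := by
  refine ⟨fun h => isDaugavetPoint_of_separated_molecules f fun ε hε => ?_,
    isDaugavetPoint_of_unbounded_molecules f⟩
  obtain ⟨u, v, A, huv, hmol, hdisj, -, hsep⟩ := h ε hε
  exact ⟨u, v, A, huv, hmol, hdisj, hsep⟩

/-- Proposition 4.6. If for every `ε > 0` there are a sequence of
molecules `(m_{u_iv_i})` in `S(f, ε)` and a sequence `(A_i)` of pairwise disjoint subsets of
`M` with `u_i ∈ A_i` and `d(u_i,x) + d(v_i,y) ≥ (1-ε)(d(u_i,v_i) + d(x,y))` for all `i` and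
`x, y ∉ A_i`, then `f` is a Daugavet-point. In particular, if for every `ε > 0` there is a
sequence of molecules `(m_{u_iv_i})` in `S(f, ε)` with `(u_i)` or `(v_i)` unbounded, then
`f` is a Daugavet-point. -/
theorem statement14 {M : Type*} [MetricSpace M] (z : M)
    (f : ↥(Lip0 M z)) (hf : ‖f‖ = 1) :
    ((∀ ε > (0:ℝ), ∃ (u v : ℕ → M) (A : ℕ → Set M),
        (∀ i, u i ≠ v i) ∧
        (∀ i, ‖molecule M z (u i) (v i)‖ ≤ 1 ∧ 1 - ε < molecule M z (u i) (v i) f) ∧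
        (Pairwise fun i j => Disjoint (A i) (A j)) ∧
        (∀ i, u i ∈ A i) ∧
        (∀ i, ∀ x ∉ A i, ∀ y ∉ A i,
          (1 - ε) * (dist (u i) (v i) + dist x y) ≤ dist (u i) x + dist (v i) y)) →
      IsDaugavetPoint f) ∧
    ((∀ ε > (0:ℝ), ∃ u v : ℕ → M,
        (∀ i, u i ≠ v i) ∧
        (∀ i, ‖molecule M z (u i) (v i)‖ ≤ 1 ∧ 1 - ε < molecule M z (u i) (v i) f) ∧
        (¬ Bornology.IsBounded (Set.range u) ∨ ¬ Bornology.IsBounded (Set.range v))) →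
      IsDaugavetPoint f) :=
  statement14_general z f
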